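/- Let F = Σ_{k≥0} x^{(2k+1)^2} ∈ (Z/2)[[x]] and G = F(x^3). Define Tr : (Z/2)(F,G) → (Z/2)(G) to be the field trace of the degree-4 extension. Then Tr(G) = 0, Tr(F) = 0, Tr(F^2 G) = 0, and Tr(F^3) = G. -/

import Mathlib

/-!
Coefficientwise, `F * G` counts modulo 2 the pairs `(a, b)` of odd numbers with
`a ^ 2 + 3 * b ^ 2 = n`. Multiplying `a + b√-3` by one of the units `(1 ± √-3) / 2` of the
Eisenstein integers, chosen so that the result again has odd coordinates, and normalising signs,
is an involution on these pairs. Its fixed points are the pairs with `a = b` or `a = 3 * b`, and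
those are counted by `F ^ 4 = F(x ^ 4)` and `G ^ 4 = G(x ^ 4)`; hence `F * G = F ^ 4 + G ^ 4`.

So `F` is a root of `X ^ 4 + G * X + G ^ 4`. This polynomial is irreducible over `𝔽₂(G)`: `G` is
transcendental, and specialising `G` to `1` gives the irreducible `X ^ 4 + X + 1` over `𝔽₂`.
In the power basis `1, F, F ^ 2, F ^ 3` the traces of `F, F ^ 2, F ^ 3` are the power sums
`0, 0, 3 * G` of the roots, while `Tr 1 = 4`.
-/

open scoped Classical
set_option synthInstance.maxHeartbeats 1000000
set_option maxHeartbeats 1000000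

noncomputable def F : PowerSeries (ZMod 2) :=
  PowerSeries.mk fun n => if ∃ k, n = (2 * k + 1) ^ 2 then 1 else 0

noncomputable def G : PowerSeries (ZMod 2) :=
  PowerSeries.mk fun n => if ∃ k, n = 3 * (2 * k + 1) ^ 2 then 1 else 0

noncomputable abbrev K : Type := FractionRing (PowerSeries (ZMod 2))

noncomputable def F' : K := algebraMap (PowerSeries (ZMod 2)) K F
noncomputable def G' : K := algebraMap (PowerSeries (ZMod 2)) K G

/-- The subfield `(Z/2)(G)` of `K`. -/
noncomputable def E : Subfield K := Subfield.closure {G'}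

/-- The field `(Z/2)(F,G) = (Z/2)(G)(F)`. -/
noncomputable def L : IntermediateField E K := IntermediateField.adjoin E {F'}

noncomputable def g : E := ⟨G', Subfield.subset_closure rfl⟩

noncomputable def Fe : L := ⟨F', IntermediateField.mem_adjoin_simple_self E F'⟩

noncomputable def gL : L := algebraMap E L g

open Finset Polynomial

theorem Finset.natCast_card_eq_card_filter_fixed_of_involution {ι R : Type*} [DecidableEq ι]
    [Ring R] [CharP R 2] {s : Finset ι} (σ : ι → ι) (hσ : ∀ a ∈ s, σ a ∈ s)
    (hinv : ∀ a ∈ s, σ (σ a) = a) :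
    (#s : R) = #{a ∈ s | σ a = a} := by
  rw [← card_filter_add_card_filter_not (fun a => σ a = a), Nat.cast_add,
    add_eq_left, card_eq_sum_ones, Nat.cast_sum, Nat.cast_one]
  refine sum_involution (fun a _ => σ a) (fun _ _ => CharTwo.add_self_eq_zero 1)
    (fun a ha _ => (mem_filter.mp ha).2) (fun a ha => ?_) (fun a ha => hinv a (mem_filter.mp ha).1)
  obtain ⟨has, hfix⟩ := mem_filter.mp ha
  exact mem_filter.mpr ⟨hσ a has, fun h => hfix ((hinv a has).symm.trans h).symm⟩

theorem PowerSeries.pow_eq_expand_zmod {p : ℕ} [hp : Fact p.Prime] (φ : PowerSeries (ZMod p)) :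
    φ ^ p = expand p hp.out.ne_zero φ := by
  ext n
  have hn : n / p < n + 1 := Nat.lt_succ_of_le (Nat.div_le_self n p)
  rw [coeff_expand, ← coeff_coe_trunc_of_lt (Nat.lt_succ_self n), ← trunc_trunc_pow,
    coeff_coe_trunc_of_lt (Nat.lt_succ_self n), ← Polynomial.coe_pow, Polynomial.coeff_coe,
    ← ZMod.expand_card, Polynomial.coeff_expand hp.out.pos, coeff_trunc, if_pos hn]

theorem PowerSeries.coeff_pow_four_zmod_two (φ : PowerSeries (ZMod 2)) (n : ℕ) :
    coeff n (φ ^ 4) = if 4 ∣ n then coeff (n / 4) φ else 0 := by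
  rw [show φ ^ 4 = (φ ^ 2) ^ 2 by ring, pow_eq_expand_zmod, pow_eq_expand_zmod, ← expand_mul,
    coeff_expand]

theorem PowerSeries.transcendental_of_constantCoeff_eq_zero {R : Type*} [CommRing R]
    [IsDomain R] {φ : PowerSeries R} (hφ : φ ≠ 0) (h0 : constantCoeff φ = 0) :
    Transcendental R φ := by
  rintro ⟨p, hp, hpφ⟩
  obtain ⟨q, hpq, hq⟩ := exists_eq_pow_rootMultiplicity_mul_and_not_dvd p hp 0
  rw [map_zero, sub_zero, Polynomial.X_dvd_iff] at hq
  rw [hpq, map_zero, sub_zero, map_mul, map_pow, aeval_X, mul_eq_zero] at hpφ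
  refine hq ?_
  rcases hpφ with h | h
  · exact absurd (pow_eq_zero_iff'.mp h).1 hφ
  · have := congrArg PowerSeries.constantCoeff h
    rw [map_zero, aeval_def, hom_eval₂, h0] at this
    simpa [coeff_zero_eq_eval_zero] using this

theorem PowerBasis.trace_gen_pow_of_gen_pow_four {R S : Type*} [CommRing R] [CommRing S]
    [Algebra R S] (pb : PowerBasis R S) (hdim : pb.dim = 4) {c d : R}
    (h : pb.gen ^ 4 = c • pb.gen + d • 1) :
    Algebra.trace R S pb.gen = 0 ∧ Algebra.trace R S (pb.gen ^ 2) = 0 ∧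
      Algebra.trace R S (pb.gen ^ 3) = 3 * c := by
  set b := pb.basis.reindex (finCongr hdim)
  have hb (i : Fin 4) : b i = pb.gen ^ (i : ℕ) := by simp [b]
  have htrace (x : S) : Algebra.trace R S x = ∑ i, b.repr (x * b i) i := by
    rw [Algebra.trace_eq_matrix_trace b, Matrix.trace]
    simp only [Matrix.diag_apply, Algebra.leftMulMatrix_eq_repr_mul]
  have h5 : pb.gen ^ 5 = c • pb.gen ^ 2 + d • pb.gen := by
    rw [pow_succ, h, add_mul, smul_mul_assoc, smul_mul_assoc, one_mul, ← pow_two]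
  have h6 : pb.gen ^ 6 = c • pb.gen ^ 3 + d • pb.gen ^ 2 := by
    rw [pow_succ, h5, add_mul, smul_mul_assoc, smul_mul_assoc, ← pow_succ, ← pow_two]
  have hb0 : 1 = b 0 := by simp [hb]
  have hb1 : pb.gen = b 1 := by simp [hb]
  have hb2 : pb.gen ^ 2 = b 2 := by simp [hb]
  have hb3 : pb.gen ^ 3 = b 3 := by simp [hb]
  simp only [htrace, Fin.sum_univ_four, ← hb0, ← hb1, ← hb2, ← hb3]
  ring_nf
  rw [h, h5, h6, hb3, hb2, hb1, hb0]
  simp only [Fin.isValue, Module.Basis.repr_self, ne_eq, zero_ne_one, not_false_eq_true,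
    Finsupp.single_eq_of_ne, Fin.reduceEq, add_zero, map_add, map_smul, Finsupp.smul_single,
    smul_eq_mul, mul_one, Finsupp.coe_add, Pi.add_apply, Finsupp.single_eq_same, one_ne_zero,
    zero_add, true_and]
  ring

lemma quadratic_mul_quadratic_ne_X_pow_four_add_X_add_one (a b c d : ZMod 2) :
    (X ^ 2 + C b * X + C a) * (X ^ 2 + C d * X + C c) ≠ X ^ 4 + X + 1 := by
  intro h
  have hexp : (X ^ 2 + C b * X + C a) * (X ^ 2 + C d * X + C c) = X ^ 4 + C (b + d) * X ^ 3
      + C (a + c + b * d) * X ^ 2 + C (b * c + a * d) * X + C (a * c) := by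
    simp only [map_add, map_mul]; ring
  have hcoeff k := congrArg (coeff · k) (hexp.symm.trans h)
  have e0 := hcoeff 0
  have e1 := hcoeff 1
  have e2 := hcoeff 2
  have e3 := hcoeff 3
  simp only [coeff_add, coeff_C_mul, coeff_X_pow, coeff_X, coeff_C, coeff_one] at e0 e1 e2 e3
  norm_num at e0 e1 e2 e3
  clear h hexp hcoeff
  revert a b c d
  decide

theorem irreducible_X_pow_four_add_X_add_one : Irreducible (X ^ 4 + X + 1 : (ZMod 2)[X]) := by
  have hmonic : (X ^ 4 + X + 1 : (ZMod 2)[X]).Monic := by monicity!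
  have hdeg : (X ^ 4 + X + 1 : (ZMod 2)[X]).natDegree = 4 := by compute_degree!
  have hroot : ∀ x : ZMod 2, ¬ (X ^ 4 + X + 1 : (ZMod 2)[X]).IsRoot x := by
    simp only [IsRoot.def, eval_add, eval_pow, eval_X, eval_one]
    decide
  rw [hmonic.irreducible_iff_natDegree']
  refine ⟨fun h => by simp [h] at hdeg, fun f g hf hg hfg hg' => ?_⟩
  rw [hdeg, Finset.mem_Ioc] at hg'
  obtain hg1 | hg2 : g.natDegree = 1 ∨ g.natDegree = 2 := by omega
  · rw [hg.eq_X_add_C hg1] at hfg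
    exact hroot (g.coeff 0) (by simp [← hfg, CharTwo.add_self_eq_zero])
  · have hf2 : f.natDegree = 2 := by
      have := congrArg natDegree hfg
      rw [hf.natDegree_mul hg, hdeg] at this
      omega
    rw [hf.as_sum, hg.as_sum, hf2, hg2] at hfg
    simp only [Finset.sum_range_succ, Finset.sum_range_zero, zero_add, pow_zero, pow_one,
      mul_one] at hfg
    exact quadratic_mul_quadratic_ne_X_pow_four_add_X_add_one
      (f.coeff 0) (f.coeff 1) (g.coeff 0) (g.coeff 1) (by rw [← hfg]; ring)

theorem irreducible_X_pow_four_add_C_mul_X_add_C_ratFunc :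
    Irreducible (X ^ 4 + C RatFunc.X * X + C (RatFunc.X ^ 4) : (RatFunc (ZMod 2))[X]) := by
  have hq : (X ^ 4 + C X * X + C (X ^ 4) : (ZMod 2)[X][X]).Monic := by monicity!
  have hirr := hq.irreducible_of_irreducible_map (evalRingHom 1) _
    (by simpa using irreducible_X_pow_four_add_X_add_one)
  simpa [RatFunc.algebraMap_X] using
    (hq.irreducible_iff_irreducible_map_fraction_map (K := RatFunc (ZMod 2))).mp hirr

/-- `a + b√-3 ↦ (a + b√-3) (1 - √-3) / 2` if `4 ∣ a + b`, and `↦ (a + b√-3) (1 + √-3) / 2`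
otherwise, with both coordinates then replaced by their absolute values. -/
def eisensteinInvolution (p : ℕ × ℕ) : ℕ × ℕ :=
  if 4 ∣ p.1 + p.2 then ((p.1 + 3 * p.2) / 2, Nat.dist p.1 p.2 / 2)
  else (Nat.dist p.1 (3 * p.2) / 2, (p.1 + p.2) / 2)

namespace eisensteinInvolution

variable {a b : ℕ}

lemma odd (ha : Odd a) (hb : Odd b) :
    Odd (eisensteinInvolution (a, b)).1 ∧ Odd (eisensteinInvolution (a, b)).2 := by
  obtain ⟨u, rfl⟩ := ha
  obtain ⟨v, rfl⟩ := hb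
  simp only [eisensteinInvolution, Nat.dist, Nat.odd_iff]
  split_ifs <;> omega

lemma involutive (ha : Odd a) (hb : Odd b) :
    eisensteinInvolution (eisensteinInvolution (a, b)) = (a, b) := by
  obtain ⟨u, rfl⟩ := ha
  obtain ⟨v, rfl⟩ := hb
  simp only [eisensteinInvolution, Nat.dist]
  split_ifs <;> simp only [Prod.mk.injEq] <;> omega

lemma eq_self_iff (ha : Odd a) (hb : Odd b) :
    eisensteinInvolution (a, b) = (a, b) ↔ a = b ∨ a = 3 * b := by
  obtain ⟨u, rfl⟩ := ha
  obtain ⟨v, rfl⟩ := hb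
  simp only [eisensteinInvolution, Nat.dist]
  split_ifs <;> simp only [Prod.mk.injEq] <;> omega

lemma norm_eq (ha : Odd a) (hb : Odd b) :
    (eisensteinInvolution (a, b)).1 ^ 2 + 3 * (eisensteinInvolution (a, b)).2 ^ 2
      = a ^ 2 + 3 * b ^ 2 := by
  rw [Nat.odd_iff] at ha hb
  simp only [eisensteinInvolution, Nat.dist]
  split_ifs
  · generalize hs : (a + 3 * b) / 2 = s
    generalize ht : (a - b + (b - a)) / 2 = t
    have hs' : 2 * s = a + 3 * b := by omega
    rcases (by omega : a = b + 2 * t ∨ b = a + 2 * t) with h | h <;> nlinarith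
  · generalize hs : (a - 3 * b + (3 * b - a)) / 2 = s
    generalize ht : (a + b) / 2 = t
    have ht' : 2 * t = a + b := by omega
    rcases (by omega : a = 3 * b + 2 * s ∨ 3 * b = a + 2 * s) with h | h <;> nlinarith

end eisensteinInvolution

def oddReps (n : ℕ) : Finset (ℕ × ℕ) :=
  {p ∈ range (n + 1) ×ˢ range (n + 1) | Odd p.1 ∧ Odd p.2 ∧ p.1 ^ 2 + 3 * p.2 ^ 2 = n}

lemma mem_oddReps {n : ℕ} {p : ℕ × ℕ} :
    p ∈ oddReps n ↔ Odd p.1 ∧ Odd p.2 ∧ p.1 ^ 2 + 3 * p.2 ^ 2 = n := by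
  rw [oddReps, mem_filter, mem_product, mem_range, mem_range, and_iff_right_iff_imp]
  rintro ⟨-, -, rfl⟩
  constructor <;> nlinarith [Nat.le_self_pow two_ne_zero p.1, Nat.le_self_pow two_ne_zero p.2]

lemma natCast_card_oddReps (n : ℕ) :
    (#(oddReps n) : ZMod 2) =
      #{p ∈ oddReps n | p.1 = 1 * p.2} + #{p ∈ oddReps n | p.1 = 3 * p.2} := by
  have hodd : ∀ p ∈ oddReps n, Odd p.1 ∧ Odd p.2 := fun p hp =>
    ⟨(mem_oddReps.mp hp).1, (mem_oddReps.mp hp).2.1⟩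
  rw [natCast_card_eq_card_filter_fixed_of_involution eisensteinInvolution ?_ ?_, ← Nat.cast_add,
    ← card_union_of_disjoint, ← filter_or]
  · congr 2
    refine filter_congr fun p hp => ?_
    rw [one_mul, ← eisensteinInvolution.eq_self_iff (hodd p hp).1 (hodd p hp).2]
  · refine disjoint_filter.mpr fun p hp h1 h3 => ?_
    obtain ⟨k, hk⟩ := (hodd p hp).2
    omega
  · rintro ⟨a, b⟩ hp
    obtain ⟨ha, hb, hn⟩ := mem_oddReps.mp hp
    exact mem_oddReps.mpr ⟨(eisensteinInvolution.odd ha hb).1,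
      (eisensteinInvolution.odd ha hb).2, (eisensteinInvolution.norm_eq ha hb).trans hn⟩
  · rintro ⟨a, b⟩ hp
    exact eisensteinInvolution.involutive (hodd _ hp).1 (hodd _ hp).2

lemma card_oddReps_filter_fst_eq_mul_snd {c : ℕ} (hc : Odd c) (n : ℕ) :
    #{p ∈ oddReps n | p.1 = c * p.2} =
      if ∃ k, n = (c ^ 2 + 3) * (2 * k + 1) ^ 2 then 1 else 0 := by
  split_ifs with h
  · obtain ⟨k, rfl⟩ := h
    rw [card_eq_one]
    refine ⟨(c * (2 * k + 1), 2 * k + 1), ?_⟩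
    ext ⟨a, b⟩
    simp only [mem_filter, mem_oddReps, mem_singleton, Prod.mk.injEq]
    constructor
    · rintro ⟨⟨-, -, hn⟩, rfl⟩
      have hb : b = 2 * k + 1 := by
        refine Nat.pow_left_injective two_ne_zero
          (Nat.eq_of_mul_eq_mul_left (by positivity : 0 < c ^ 2 + 3) ?_)
        simpa [mul_pow] using
          (by linarith : (c ^ 2 + 3) * b ^ 2 = (c ^ 2 + 3) * (2 * k + 1) ^ 2)
      exact ⟨by rw [hb], hb⟩
    · rintro ⟨rfl, rfl⟩
      exact ⟨⟨hc.mul (odd_two_mul_add_one k), odd_two_mul_add_one k, by ring⟩, rfl⟩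
  · rw [card_eq_zero, filter_eq_empty_iff]
    rintro ⟨a, b⟩ hp (rfl : a = c * b)
    obtain ⟨-, ⟨k, rfl⟩, hn⟩ := mem_oddReps.mp hp
    exact h ⟨k, by rw [← hn]; ring⟩

lemma coeff_F_mul_G (n : ℕ) : PowerSeries.coeff n (F * G) = #(oddReps n) := by
  simp only [PowerSeries.coeff_mul, F, G, PowerSeries.coeff_mk, ite_zero_mul_ite_zero, mul_one,
    sum_boole]
  congr 1
  symm
  refine card_nbij (fun p => (p.1 ^ 2, 3 * p.2 ^ 2)) ?_ ?_ ?_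
  · rintro ⟨a, b⟩ hp
    obtain ⟨⟨k, rfl⟩, ⟨l, rfl⟩, hn⟩ := mem_oddReps.mp hp
    simp only [mem_coe, mem_filter, HasAntidiagonal.mem_antidiagonal]
    exact ⟨hn, ⟨k, rfl⟩, ⟨l, rfl⟩⟩
  · rintro ⟨a, b⟩ - ⟨a', b'⟩ - h
    simp only [Prod.mk.injEq] at h ⊢
    exact ⟨Nat.pow_left_injective two_ne_zero h.1,
      Nat.pow_left_injective two_ne_zero (Nat.eq_of_mul_eq_mul_left three_pos h.2)⟩
  · rintro ⟨i, j⟩ hij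
    simp only [mem_coe, mem_filter, HasAntidiagonal.mem_antidiagonal] at hij
    obtain ⟨hn, ⟨k, rfl⟩, ⟨l, rfl⟩⟩ := hij
    exact ⟨(2 * k + 1, 2 * l + 1),
      mem_oddReps.mpr ⟨odd_two_mul_add_one k, odd_two_mul_add_one l, hn⟩, rfl⟩

lemma coeff_F_pow_four (n : ℕ) :
    PowerSeries.coeff n (F ^ 4) = if ∃ k, n = 4 * (2 * k + 1) ^ 2 then 1 else 0 := by
  rw [PowerSeries.coeff_pow_four_zmod_two, F, PowerSeries.coeff_mk, ← ite_and]
  exact if_congr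
    ⟨fun ⟨_, k, hk⟩ => ⟨k, by omega⟩, fun ⟨k, hk⟩ => ⟨by omega, k, by omega⟩⟩ rfl rfl

lemma coeff_G_pow_four (n : ℕ) :
    PowerSeries.coeff n (G ^ 4) = if ∃ k, n = 12 * (2 * k + 1) ^ 2 then 1 else 0 := by
  rw [PowerSeries.coeff_pow_four_zmod_two, G, PowerSeries.coeff_mk, ← ite_and]
  exact if_congr
    ⟨fun ⟨_, k, hk⟩ => ⟨k, by omega⟩, fun ⟨k, hk⟩ => ⟨by omega, k, by omega⟩⟩ rfl rfl

theorem F_mul_G : F * G = F ^ 4 + G ^ 4 := by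
  ext n
  rw [coeff_F_mul_G, natCast_card_oddReps, card_oddReps_filter_fst_eq_mul_snd odd_one,
    card_oddReps_filter_fst_eq_mul_snd (by decide : Odd 3), map_add, coeff_F_pow_four,
    coeff_G_pow_four]
  norm_num

lemma G_ne_zero : G ≠ 0 := by
  intro h
  have := congrArg (PowerSeries.coeff 3) h
  rw [G, PowerSeries.coeff_mk, if_pos ⟨0, by norm_num⟩] at this
  exact one_ne_zero this

lemma constantCoeff_G : PowerSeries.constantCoeff G = 0 := by
  rw [← PowerSeries.coeff_zero_eq_constantCoeff_apply, G, PowerSeries.coeff_mk, if_neg]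
  rintro ⟨k, hk⟩
  simp at hk

instance : CharP K 2 := charP_of_injective_algebraMap' (ZMod 2) 2

lemma transcendental_G' : Transcendental (ZMod 2) G' :=
  (transcendental_algebraMap_iff (IsFractionRing.injective _ K)).mpr
    (PowerSeries.transcendental_of_constantCoeff_eq_zero G_ne_zero constantCoeff_G)

lemma adjoin_G'_toSubfield : (IntermediateField.adjoin (ZMod 2) {G'}).toSubfield = E := by
  rw [IntermediateField.adjoin_toSubfield, E]
  refine le_antisymm (Subfield.closure_le.mpr (Set.union_subset ?_ Subfield.subset_closure))
    (Subfield.closure_mono Set.subset_union_right)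
  rintro _ ⟨c, rfl⟩
  rw [← ZMod.natCast_zmod_val c, map_natCast]
  exact natCast_mem _ _

noncomputable def ratFuncEquivE : RatFunc (ZMod 2) ≃+* E :=
  (RatFunc.algEquivOfTranscendental G' transcendental_G').toRingEquiv.trans
    (RingEquiv.subfieldCongr adjoin_G'_toSubfield)

lemma ratFuncEquivE_X : ratFuncEquivE RatFunc.X = g :=
  Subtype.ext (RatFunc.algEquivOfTranscendental_X G' transcendental_G')

lemma irreducible_X_pow_four_add_C_g_mul_X_add_C :
    Irreducible (X ^ 4 + C g * X + C (g ^ 4) : E[X]) := by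
  simpa [ratFuncEquivE_X] using (MulEquiv.irreducible_iff (mapEquiv ratFuncEquivE)).mpr
    irreducible_X_pow_four_add_C_mul_X_add_C_ratFunc

lemma F'_pow_four : F' ^ 4 = G' * F' + G' ^ 4 := by
  have h : F' * G' = F' ^ 4 + G' ^ 4 := by
    rw [F', G', ← map_mul, ← map_pow, ← map_pow, ← map_add, F_mul_G]
  linear_combination -h - G' ^ 4 * (CharTwo.two_eq_zero : (2 : K) = 0)

lemma aeval_F' : aeval F' (X ^ 4 + C g * X + C (g ^ 4) : E[X]) = 0 := by
  simp only [map_add, map_pow, map_mul, aeval_X, aeval_C]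
  show F' ^ 4 + G' * F' + G' ^ 4 = 0
  linear_combination F'_pow_four + (G' * F' + G' ^ 4) * (CharTwo.two_eq_zero : (2 : K) = 0)

lemma monic_X_pow_four_add_C_g_mul_X_add_C : (X ^ 4 + C g * X + C (g ^ 4) : E[X]).Monic := by
  monicity!

lemma minpoly_F' : minpoly E F' = X ^ 4 + C g * X + C (g ^ 4) :=
  (minpoly.eq_of_irreducible_of_monic irreducible_X_pow_four_add_C_g_mul_X_add_C aeval_F'
    monic_X_pow_four_add_C_g_mul_X_add_C).symm

lemma isIntegral_F' : IsIntegral E F' :=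
  ⟨_, monic_X_pow_four_add_C_g_mul_X_add_C, by rw [← aeval_def, aeval_F']⟩

noncomputable def powerBasisFe : PowerBasis E L := IntermediateField.adjoin.powerBasis isIntegral_F'

lemma powerBasisFe_gen : powerBasisFe.gen = Fe := rfl

lemma powerBasisFe_dim : powerBasisFe.dim = 4 := by
  rw [powerBasisFe, IntermediateField.adjoin.powerBasis_dim, minpoly_F']
  compute_degree!

lemma Fe_pow_four : Fe ^ 4 = g • Fe + g ^ 4 • 1 := by
  apply Subtype.ext
  simp only [IntermediateField.coe_pow, IntermediateField.coe_add, Algebra.smul_def, mul_one,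
    map_pow]
  exact F'_pow_four

/-- The field trace of the extension `(Z/2)(F,G)/(Z/2)(G)` sends
`G, F, F²G, F³` to `0, 0, 0, G`. -/
theorem stmt_8 :
    Algebra.trace E L gL = 0 ∧ Algebra.trace E L Fe = 0 ∧
    Algebra.trace E L (Fe ^ 2 * gL) = 0 ∧ Algebra.trace E L (Fe ^ 3) = g := by
  obtain ⟨hF, hF2, hF3⟩ :=
    powerBasisFe.trace_gen_pow_of_gen_pow_four powerBasisFe_dim Fe_pow_four
  rw [powerBasisFe_gen] at hF hF2 hF3
  have two_eq_zero : (2 : E) = 0 := CharTwo.two_eq_zero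
  refine ⟨?_, hF, ?_, ?_⟩
  · rw [gL, Algebra.trace_algebraMap, powerBasisFe.finrank, powerBasisFe_dim, nsmul_eq_mul]
    linear_combination (2 * g) * two_eq_zero
  · rw [gL, mul_comm, ← Algebra.smul_def, LinearMap.map_smul, hF2, smul_zero]
  · rw [hF3]
    linear_combination g * two_eq_zero
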